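/- Let a, b ∈ (0,1) with Δ = b - a, and t ∈ (0,1). Then the f_t-divergence D_{f_t}(Ber(a)‖Ber(b)) = a^{1-t} b^t + (1-a)^{1-t}(1-b)^t satisfies 1 - a^{1-t}b^t - (1-a)^{1-t}(1-b)^t ≥ 2·t(1-t)·Δ². -/

import Mathlib

open Set

/-- Denominator positivity. -/
private lemma denom_pos {t x : ℝ} (ht0 : 0 < t) (ht1 : t < 1) (hx : 0 < x) :
    0 < (1 + t) * x + (2 - t) := by nlinarith

/-- Cube of the weighted AM-GM inequality with weights `(1+t)/3, (2-t)/3`. -/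
private lemma cube_amgm {t x : ℝ} (ht0 : 0 < t) (ht1 : t < 1) (hx : 0 < x) :
    27 * x ^ (1 + t) ≤ ((1 + t) * x + (2 - t)) ^ 3 := by
  have hamgm := Real.geom_mean_le_arith_mean2_weighted
    (w₁ := (1 + t) / 3) (w₂ := (2 - t) / 3) (p₁ := x) (p₂ := 1)
    (by linarith) (by linarith) hx.le zero_le_one (by ring)
  rw [Real.one_rpow, mul_one] at hamgm
  have hamgm2 : x ^ ((1 + t) / 3) ≤ ((1 + t) / 3 * x + (2 - t) / 3) := by linarith
  have hcube : (x ^ ((1 + t) / 3)) ^ (3 : ℕ) = x ^ (1 + t) := by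
    rw [← Real.rpow_natCast (x ^ ((1 + t) / 3)) 3, ← Real.rpow_mul hx.le]
    norm_num
  have hpow : (x ^ ((1 + t) / 3)) ^ (3 : ℕ)
      ≤ ((1 + t) / 3 * x + (2 - t) / 3) ^ (3 : ℕ) :=
    pow_le_pow_left₀ (Real.rpow_nonneg hx.le _) hamgm2 3
  rw [hcube] at hpow
  nlinarith [hpow]

/-- The key one-variable inequality: a self-improved weighted AM-GM with an explicit
quadratic gap. -/
private lemma key_ineq {t : ℝ} (ht0 : 0 < t) (ht1 : t < 1) {x : ℝ} (hx : 0 < x) :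
    x ^ (1 - t) + 3 * t * (1 - t) / 2 * ((x - 1) ^ 2 / ((1 + t) * x + (2 - t)))
      ≤ (1 - t) * x + t := by
  set c : ℝ := 3 * t * (1 - t) / 2 with hc
  -- the gap function F, its derivative G, and the second derivative H
  set F : ℝ → ℝ := fun y => (1 - t) * y + t - y ^ (1 - t)
    - c * ((y - 1) ^ 2 / ((1 + t) * y + (2 - t))) with hF
  set G : ℝ → ℝ := fun y => (1 - t) - (1 - t) * y ^ (-t)
    - c * ((y - 1) * ((1 + t) * y + (5 - t)) / ((1 + t) * y + (2 - t)) ^ 2) with hG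
  set H : ℝ → ℝ := fun y => t * (1 - t) * y ^ (-t - 1)
    - 27 * t * (1 - t) / ((1 + t) * y + (2 - t)) ^ 3 with hH
  have hFderiv : ∀ y : ℝ, 0 < y → HasDerivAt F (G y) y := by
    intro y hy
    have hLy : 0 < (1 + t) * y + (2 - t) := denom_pos ht0 ht1 hy
    have h1 : HasDerivAt (fun z : ℝ => (1 - t) * z + t) (1 - t) y := by
      simpa using ((hasDerivAt_id y).const_mul (1 - t)).add_const t
    have h2 : HasDerivAt (fun z : ℝ => z ^ (1 - t)) ((1 - t) * y ^ (1 - t - 1)) y :=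
      Real.hasDerivAt_rpow_const (Or.inl hy.ne')
    have hnum : HasDerivAt (fun z : ℝ => (z - 1) ^ 2) (2 * (y - 1)) y := by
      simpa using ((hasDerivAt_id y).sub_const 1).fun_pow (n := 2)
    have hden : HasDerivAt (fun z : ℝ => (1 + t) * z + (2 - t)) (1 + t) y := by
      simpa using ((hasDerivAt_id y).const_mul (1 + t)).add_const (2 - t)
    have hq : HasDerivAt (fun z : ℝ => (z - 1) ^ 2 / ((1 + t) * z + (2 - t)))
        ((2 * (y - 1) * ((1 + t) * y + (2 - t)) - (y - 1) ^ 2 * (1 + t))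
          / ((1 + t) * y + (2 - t)) ^ 2) y := hnum.div hden hLy.ne'
    have hcomb := (h1.sub h2).sub (hq.const_mul c)
    have hGy : G y = (1 - t) - (1 - t) * y ^ (1 - t - 1)
        - c * ((2 * (y - 1) * ((1 + t) * y + (2 - t)) - (y - 1) ^ 2 * (1 + t))
          / ((1 + t) * y + (2 - t)) ^ 2) := by
      simp only [hG]
      rw [show 2 * (y - 1) * ((1 + t) * y + (2 - t)) - (y - 1) ^ 2 * (1 + t)
        = (y - 1) * ((1 + t) * y + (5 - t)) from by ring]
      rw [show (1 - t - 1 : ℝ) = -t from by ring]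
    rw [hF, hGy]
    exact hcomb
  have hGderiv : ∀ y : ℝ, 0 < y → HasDerivAt G (H y) y := by
    intro y hy
    have hLy : 0 < (1 + t) * y + (2 - t) := denom_pos ht0 ht1 hy
    have h2 : HasDerivAt (fun z : ℝ => z ^ (-t)) (-t * y ^ (-t - 1)) y :=
      Real.hasDerivAt_rpow_const (Or.inl hy.ne')
    have hN : HasDerivAt (fun z : ℝ => (z - 1) * ((1 + t) * z + (5 - t)))
        (1 * ((1 + t) * y + (5 - t)) + (y - 1) * (1 + t)) y := by
      have ha : HasDerivAt (fun z : ℝ => z - 1) 1 y := (hasDerivAt_id y).sub_const 1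
      have hb : HasDerivAt (fun z : ℝ => (1 + t) * z + (5 - t)) (1 + t) y := by
        simpa using ((hasDerivAt_id y).const_mul (1 + t)).add_const (5 - t)
      exact ha.mul hb
    have hL2 : HasDerivAt (fun z : ℝ => ((1 + t) * z + (2 - t)) ^ 2)
        (2 * ((1 + t) * y + (2 - t)) ^ 1 * (1 + t)) y := by
      have hb : HasDerivAt (fun z : ℝ => (1 + t) * z + (2 - t)) (1 + t) y := by
        simpa using ((hasDerivAt_id y).const_mul (1 + t)).add_const (2 - t)
      simpa using hb.fun_pow (n := 2)
    have hq2 : HasDerivAt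
        (fun z : ℝ => (z - 1) * ((1 + t) * z + (5 - t)) / ((1 + t) * z + (2 - t)) ^ 2)
        (((1 * ((1 + t) * y + (5 - t)) + (y - 1) * (1 + t)) * ((1 + t) * y + (2 - t)) ^ 2
          - (y - 1) * ((1 + t) * y + (5 - t)) * (2 * ((1 + t) * y + (2 - t)) ^ 1 * (1 + t)))
          / (((1 + t) * y + (2 - t)) ^ 2) ^ 2) y :=
      hN.div hL2 (pow_ne_zero _ hLy.ne')
    have hcomb := ((hasDerivAt_const y (1 - t)).sub (h2.const_mul (1 - t))).sub
      (hq2.const_mul c)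
    have hHy : H y = 0 - (1 - t) * (-t * y ^ (-t - 1))
        - c * (((1 * ((1 + t) * y + (5 - t)) + (y - 1) * (1 + t)) * ((1 + t) * y + (2 - t)) ^ 2
          - (y - 1) * ((1 + t) * y + (5 - t)) * (2 * ((1 + t) * y + (2 - t)) ^ 1 * (1 + t)))
          / (((1 + t) * y + (2 - t)) ^ 2) ^ 2) := by
      simp only [hH, hc]
      rw [show (1 * ((1 + t) * y + (5 - t)) + (y - 1) * (1 + t)) * ((1 + t) * y + (2 - t)) ^ 2
          - (y - 1) * ((1 + t) * y + (5 - t)) * (2 * ((1 + t) * y + (2 - t)) ^ 1 * (1 + t))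
        = 18 * ((1 + t) * y + (2 - t)) from by ring]
      have hLne : ((1 + t) * y + (2 - t)) ≠ 0 := hLy.ne'
      field_simp
      ring
    rw [hG, hHy]
    exact hcomb
  have hHnonneg : ∀ y : ℝ, 0 < y → 0 ≤ H y := by
    intro y hy
    have hLy : 0 < (1 + t) * y + (2 - t) := denom_pos ht0 ht1 hy
    have h27 := cube_amgm ht0 ht1 hy
    have hyp : (0:ℝ) < y ^ (1 + t) := Real.rpow_pos_of_pos hy _
    have htu : 0 ≤ t * (1 - t) := mul_nonneg ht0.le (by linarith)
    have hL3 : (0:ℝ) < ((1 + t) * y + (2 - t)) ^ 3 := by positivity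
    have he : y ^ (-t - 1) = (y ^ (1 + t))⁻¹ := by
      rw [show (-t - 1 : ℝ) = -(1 + t) from by ring, Real.rpow_neg hy.le]
    have hkey2 : 27 * t * (1 - t) / ((1 + t) * y + (2 - t)) ^ 3
        ≤ t * (1 - t) / y ^ (1 + t) := by
      rw [div_le_div_iff₀ hL3 hyp]
      nlinarith [mul_le_mul_of_nonneg_left h27 htu]
    simp only [hH]
    rw [he, ← div_eq_mul_inv, sub_nonneg]
    exact hkey2
  -- G is monotone on (0, ∞)
  have hGmono : MonotoneOn G (Ioi (0:ℝ)) := by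
    apply monotoneOn_of_deriv_nonneg (convex_Ioi 0)
    · exact fun y hy => (hGderiv y hy).continuousAt.continuousWithinAt
    · intro y hy
      rw [interior_Ioi] at hy
      exact (hGderiv y hy).differentiableAt.differentiableWithinAt
    · intro y hy
      rw [interior_Ioi] at hy
      rw [(hGderiv y hy).deriv]
      exact hHnonneg y hy
  have hG1 : G 1 = 0 := by
    simp only [hG]
    norm_num [Real.one_rpow]
  have hF1 : F 1 = 0 := by
    simp only [hF]
    norm_num [Real.one_rpow]
  -- F attains its minimum 0 at x = 1
  have hFnonneg : 0 ≤ F x := by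
    rcases le_or_gt 1 x with hx1 | hx1
    · -- x ≥ 1 : F monotone on [1, ∞)
      have hmono : MonotoneOn F (Ici (1:ℝ)) := by
        apply monotoneOn_of_deriv_nonneg (convex_Ici 1)
        · intro y hy
          have hy0 : (0:ℝ) < y := lt_of_lt_of_le zero_lt_one hy
          exact (hFderiv y hy0).continuousAt.continuousWithinAt
        · intro y hy
          rw [interior_Ici] at hy
          have hy0 : (0:ℝ) < y := lt_trans zero_lt_one hy
          exact (hFderiv y hy0).differentiableAt.differentiableWithinAt
        · intro y hy
          rw [interior_Ici] at hy
          have hy0 : (0:ℝ) < y := lt_trans zero_lt_one hy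
          rw [(hFderiv y hy0).deriv]
          have := hGmono (mem_Ioi.mpr zero_lt_one) (mem_Ioi.mpr hy0) (le_of_lt hy)
          rw [hG1] at this
          exact this
      have := hmono self_mem_Ici (mem_Ici.mpr hx1) hx1
      rw [hF1] at this
      exact this
    · -- x < 1 : F antitone on (0, 1]
      have hanti : AntitoneOn F (Ioc (0:ℝ) 1) := by
        apply antitoneOn_of_deriv_nonpos (convex_Ioc 0 1)
        · exact fun y hy => (hFderiv y hy.1).continuousAt.continuousWithinAt
        · intro y hy
          rw [interior_Ioc] at hy
          exact (hFderiv y hy.1).differentiableAt.differentiableWithinAt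
        · intro y hy
          rw [interior_Ioc] at hy
          rw [(hFderiv y hy.1).deriv]
          have := hGmono (mem_Ioi.mpr hy.1) (mem_Ioi.mpr zero_lt_one) (le_of_lt hy.2)
          rw [hG1] at this
          exact this
      have := hanti (mem_Ioc.mpr ⟨hx, hx1.le⟩) (mem_Ioc.mpr ⟨zero_lt_one, le_refl 1⟩) hx1.le
      rw [hF1] at this
      exact this
  rw [hF] at hFnonneg
  simp only at hFnonneg
  linarith

/-- Two-variable homogeneous form of the key inequality. -/
private lemma pair_ineq {t : ℝ} (ht0 : 0 < t) (ht1 : t < 1) {x y : ℝ}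
    (hx : 0 < x) (hy : 0 < y) :
    x ^ (1 - t) * y ^ t + 3 * t * (1 - t) / 2 * ((x - y) ^ 2 / ((1 + t) * x + (2 - t) * y))
      ≤ (1 - t) * x + t * y := by
  have hxy : 0 < x / y := div_pos hx hy
  have hkey := key_ineq ht0 ht1 hxy
  have hW : 0 < (1 + t) * x + (2 - t) * y := by nlinarith
  have hW' : 0 < (1 + t) * (x / y) + (2 - t) := denom_pos ht0 ht1 hxy
  -- multiply through by y > 0
  have hmul := mul_le_mul_of_nonneg_right hkey hy.le
  have hyt : y ^ t = y / y ^ (1 - t) := by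
    rw [eq_div_iff (by positivity : (y:ℝ) ^ (1 - t) ≠ 0), ← Real.rpow_add hy,
      show t + (1 - t) = (1:ℝ) from by ring, Real.rpow_one]
  have e1 : (x / y) ^ (1 - t) * y = x ^ (1 - t) * y ^ t := by
    rw [Real.div_rpow hx.le hy.le, hyt, div_mul_eq_mul_div, mul_div_assoc]
  have e2 : 3 * t * (1 - t) / 2 * ((x / y - 1) ^ 2 / ((1 + t) * (x / y) + (2 - t))) * y
      = 3 * t * (1 - t) / 2 * ((x - y) ^ 2 / ((1 + t) * x + (2 - t) * y)) := by
    have hW'ne : (1 + t) * (x / y) + (2 - t) ≠ 0 := hW'.ne'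
    field_simp
  have e3 : ((1 - t) * (x / y) + t) * y = (1 - t) * x + t * y := by
    field_simp
  have expand : ((x / y) ^ (1 - t)
      + 3 * t * (1 - t) / 2 * ((x / y - 1) ^ 2 / ((1 + t) * (x / y) + (2 - t)))) * y
      = x ^ (1 - t) * y ^ t
        + 3 * t * (1 - t) / 2 * ((x - y) ^ 2 / ((1 + t) * x + (2 - t) * y)) := by
    rw [add_mul, e1, e2]
  rw [expand, e3] at hmul
  exact hmul

/-- Quantitative lower bound on one minus the `f_t`-divergence between Bernoulli
distributions: `1 - a^{1-t}b^t - (1-a)^{1-t}(1-b)^t ≥ 2t(1-t)(b-a)²`. -/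
theorem ft_divergence_quadratic_gap (a b t : ℝ) (ha : a ∈ Set.Ioo (0:ℝ) 1)
    (hb : b ∈ Set.Ioo (0:ℝ) 1) (ht : t ∈ Set.Ioo (0:ℝ) 1) :
    2 * t * (1 - t) * (b - a) ^ 2
      ≤ 1 - (a ^ (1 - t) * b ^ t + (1 - a) ^ (1 - t) * (1 - b) ^ t) := by
  obtain ⟨ha0, ha1⟩ := ha
  obtain ⟨hb0, hb1⟩ := hb
  obtain ⟨ht0, ht1⟩ := ht
  have h1 := pair_ineq ht0 ht1 ha0 hb0
  have h2 := pair_ineq ht0 ht1 (by linarith : (0:ℝ) < 1 - a) (by linarith : (0:ℝ) < 1 - b)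
  set W₁ : ℝ := (1 + t) * a + (2 - t) * b with hW₁def
  set W₂ : ℝ := (1 + t) * (1 - a) + (2 - t) * (1 - b) with hW₂def
  have hW₁ : 0 < W₁ := by rw [hW₁def]; nlinarith
  have hW₂ : 0 < W₂ := by rw [hW₂def]; nlinarith
  have hWsum : W₁ + W₂ = 3 := by rw [hW₁def, hW₂def]; ring
  have hWprod : W₁ * W₂ ≤ 9 / 4 := by nlinarith [sq_nonneg (W₁ - W₂)]
  have hX : 0 ≤ t * (1 - t) * (b - a) ^ 2 :=
    mul_nonneg (mul_nonneg ht0.le (by linarith)) (sq_nonneg _)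
  have hd1 : 2 * t * (1 - t) * (b - a) ^ 2
      ≤ 3 * t * (1 - t) / 2 * ((a - b) ^ 2 / W₁)
        + 3 * t * (1 - t) / 2 * ((1 - a - (1 - b)) ^ 2 / W₂) := by
    have expand : 3 * t * (1 - t) / 2 * ((a - b) ^ 2 / W₁)
        + 3 * t * (1 - t) / 2 * ((1 - a - (1 - b)) ^ 2 / W₂)
        = (3 * t * (1 - t) / 2 * (a - b) ^ 2 * W₂ + 3 * t * (1 - t) / 2 * (a - b) ^ 2 * W₁)
          / (W₁ * W₂) := by
      field_simp
      ring
    rw [expand, le_div_iff₀ (mul_pos hW₁ hW₂)]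
    have hXsum : t * (1 - t) * (b - a) ^ 2 * W₁ + t * (1 - t) * (b - a) ^ 2 * W₂
        = 3 * (t * (1 - t) * (b - a) ^ 2) := by
      rw [← mul_add, hWsum]
      ring
    nlinarith [mul_le_mul_of_nonneg_left hWprod hX, hXsum]
  linarith [h1, h2, hd1]
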